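/- Let M be a finite metric space on n points, let N_1,…,N_k be finite ultrametric spaces, let φ_i : M → N_i be maps with d_{N_i}(φ_i(u), φ_i(v)) ≥ d_M(u,v) for all u,v ∈ M and all i (non-contractive embeddings), and let p_1,…,p_k ≥ 0 with Σ_i p_i = 1 be such that Σ_i p_i · d_{N_i}(φ_i(u), φ_i(v)) ≤ α·d_M(u,v) for all u,v ∈ M. Then there exist a finite ultrametric space N with |N| ≤ k·n and a surjective non-contractive multi-embedding f : N → M with path distortion at most α. -/

import Mathlib

/-- An ultrametric space: the distance satisfies the strong triangle inequality. -/
def IsUltrametricSpace (X : Type*) [MetricSpace X] : Prop :=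
  ∀ x y z : X, dist x z ≤ max (dist x y) (dist y z)

/-- A multi-embedding `f : N → M` (a surjective map) is non-contractive if
distances in `N` dominate the distances of the images in `M`. -/
def NonContractive {N M : Type*} [MetricSpace N] [MetricSpace M] (f : N → M) : Prop :=
  ∀ u v : N, dist (f u) (f v) ≤ dist u v

/-- The length of a path (finite sequence of points) in a metric space. -/
noncomputable def pathLength {X : Type*} [MetricSpace X] (p : List X) : ℝ :=
  (List.zipWith dist p p.tail).sum

/-- A non-contractive multi-embedding `f : N → M` has path distortion at most `α`. -/
def PathDistortionLE {N M : Type*} [MetricSpace N] [MetricSpace M] (f : N → M) (α : ℝ) : Prop :=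
  ∀ p : List M, ∃ p' : List N, p'.map f = p ∧ pathLength p' ≤ α * pathLength p


/-! Glue the images `φ_i(M) ⊆ N_i` into one space by putting a constant `D`, at
least every distance occurring inside the copies, between any two points in different copies;
this keeps the strong triangle inequality. A path in `M` lifts into each copy, and the
`p`-weighted average of the lifted lengths is at most `α` times the length of the path, so some
copy carries a lift of length at most that. -/

open Function

lemma pathLength_map {X Y : Type*} [MetricSpace X] [MetricSpace Y] (g : X → Y) (q : List X) :
    pathLength (q.map g) = (List.zipWith (fun a b => dist (g a) (g b)) q q.tail).sum := by
  rw [pathLength, ← List.map_tail, List.zipWith_map]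

lemma pathLength_cons_cons {X : Type*} [MetricSpace X] (a b : X) (q : List X) :
    pathLength (a :: b :: q) = dist a b + pathLength (b :: q) := by
  simp [pathLength]

lemma sum_mul_pathLength_map_le {ι X : Type*} {Y : ι → Type*} [Fintype ι] [MetricSpace X]
    [∀ i, MetricSpace (Y i)] (p : ι → ℝ) (φ : ∀ i, X → Y i) (α : ℝ)
    (h : ∀ u v, ∑ i, p i * dist (φ i u) (φ i v) ≤ α * dist u v) (q : List X) :
    ∑ i, p i * pathLength (q.map (φ i)) ≤ α * pathLength q := by
  induction q with
  | nil => simp [pathLength]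
  | cons a q ih =>
    cases q with
    | nil => simp [pathLength]
    | cons b q =>
      simp only [List.map_cons, pathLength_cons_cons] at ih ⊢
      simp only [mul_add, Finset.sum_add_distrib]
      exact add_le_add (h a b) ih

lemma exists_le_of_sum_mul_le {ι : Type*} [Fintype ι] [Nonempty ι] {p F : ι → ℝ} {c : ℝ}
    (hp : ∀ i, 0 ≤ p i) (hpsum : ∑ i, p i = 1) (h : ∑ i, p i * F i ≤ c) : ∃ i, F i ≤ c := by
  obtain ⟨i, hi⟩ := Finite.exists_min F
  refine ⟨i, le_trans ?_ h⟩
  calc F i = ∑ j, p j * F i := by rw [← Finset.sum_mul, hpsum, one_mul]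
    _ ≤ ∑ j, p j * F j := Finset.sum_le_sum fun j _ => mul_le_mul_of_nonneg_left (hi j) (hp j)

lemma exists_pos_forall_dist_le {ι X : Type*} {Y : ι → Type*} [Finite ι] [Finite X]
    [∀ i, MetricSpace (Y i)] (ψ : ∀ i, X → Y i) :
    ∃ D > 0, ∀ i x y, dist (ψ i x) (ψ i y) ≤ D := by
  obtain ⟨C, hC⟩ := Finite.bddAbove_range fun t : ι × X × X => dist (ψ t.1 t.2.1) (ψ t.1 t.2.2)
  exact ⟨max C 1, by positivity, fun i x y =>
    (hC ⟨(i, x, y), rfl⟩).trans (le_max_left C 1)⟩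

section Glue

variable {ι X : Type*} {Y : ι → Type*} [DecidableEq ι] [∀ i, MetricSpace (Y i)]
  (ψ : ∀ i, X → Y i) (D : ℝ)

def glueDist (a b : ι × X) : ℝ :=
  if a.1 = b.1 then dist (ψ a.1 a.2) (ψ a.1 b.2) else D

variable {ψ D}

@[simp]
lemma glueDist_mk_mk (i : ι) (x y : X) : glueDist ψ D (i, x) (i, y) = dist (ψ i x) (ψ i y) :=
  if_pos rfl

lemma glueDist_of_ne {i j : ι} (x y : X) (h : i ≠ j) : glueDist ψ D (i, x) (j, y) = D :=
  if_neg h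

lemma glueDist_self (a : ι × X) : glueDist ψ D a a = 0 := by
  simp [glueDist]

lemma glueDist_comm (a b : ι × X) : glueDist ψ D a b = glueDist ψ D b a := by
  rcases a with ⟨i, x⟩
  rcases b with ⟨j, y⟩
  by_cases h : i = j
  · subst h
    simp [dist_comm]
  · rw [glueDist_of_ne x y h, glueDist_of_ne y x (Ne.symm h)]

lemma glueDist_le (hD : ∀ i x y, dist (ψ i x) (ψ i y) ≤ D) (a b : ι × X) :
    glueDist ψ D a b ≤ D := by
  unfold glueDist
  split_ifs
  exacts [hD _ _ _, le_rfl]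

lemma glueDist_nonneg (hD : 0 ≤ D) (a b : ι × X) : 0 ≤ glueDist ψ D a b := by
  unfold glueDist
  split_ifs
  exacts [dist_nonneg, hD]

lemma glueDist_le_max (hU : ∀ i, IsUltrametricSpace (Y i))
    (hD : ∀ i x y, dist (ψ i x) (ψ i y) ≤ D) (a b c : ι × X) :
    glueDist ψ D a c ≤ max (glueDist ψ D a b) (glueDist ψ D b c) := by
  rcases a with ⟨i, x⟩
  rcases b with ⟨j, y⟩
  rcases c with ⟨l, z⟩
  by_cases hil : i = l
  · subst hil
    by_cases hij : i = j
    · subst hij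
      simpa using hU i _ _ _
    · rw [glueDist_of_ne x y hij]
      exact le_max_of_le_left (glueDist_le hD _ _)
  · rw [glueDist_of_ne x z hil]
    by_cases hij : i = j
    · subst hij
      rw [glueDist_of_ne y z hil]
      exact le_max_right _ _
    · rw [glueDist_of_ne x y hij]
      exact le_max_left _ _

lemma eq_of_glueDist_eq_zero (hψ : ∀ i, Injective (ψ i)) (hD : D ≠ 0) {a b : ι × X}
    (h : glueDist ψ D a b = 0) : a = b := by
  rcases a with ⟨i, x⟩
  rcases b with ⟨j, y⟩
  by_cases hij : i = j
  · subst hij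
    rw [glueDist_mk_mk, dist_eq_zero] at h
    rw [hψ i h]
  · exact absurd ((glueDist_of_ne x y hij).symm.trans h) hD

abbrev glueMetricSpace (hU : ∀ i, IsUltrametricSpace (Y i)) (hψ : ∀ i, Injective (ψ i))
    (hD : 0 < D) (hDψ : ∀ i x y, dist (ψ i x) (ψ i y) ≤ D) : MetricSpace (ι × X) where
  dist := glueDist ψ D
  dist_self := glueDist_self (ψ := ψ)
  dist_comm := glueDist_comm
  dist_triangle a b c := (glueDist_le_max hU hDψ a b c).trans <|
    max_le_add_of_nonneg (glueDist_nonneg hD.le a b) (glueDist_nonneg hD.le b c)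
  eq_of_dist_eq_zero := eq_of_glueDist_eq_zero hψ hD.ne'

lemma dist_le_glueDist {M : Type*} [MetricSpace M] {π : X → M}
    (hπ : ∀ i x y, dist (π x) (π y) ≤ dist (ψ i x) (ψ i y))
    (hD : ∀ i x y, dist (ψ i x) (ψ i y) ≤ D) (a b : ι × X) :
    dist (π a.2) (π b.2) ≤ glueDist ψ D a b := by
  unfold glueDist
  split_ifs
  exacts [hπ _ _ _, (hπ a.1 _ _).trans (hD _ _ _)]

end Glue

theorem exists_ultrametric_multiEmbedding_prod {ι X M : Type*} {Y : ι → Type*} [Fintype ι]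
    [DecidableEq ι] [Finite X] [MetricSpace M] [∀ i, MetricSpace (Y i)]
    (hU : ∀ i, IsUltrametricSpace (Y i)) (e : X ≃ M) (φ : ∀ i, M → Y i)
    (hφ : ∀ i u v, dist u v ≤ dist (φ i u) (φ i v))
    (p : ι → ℝ) (hp : ∀ i, 0 ≤ p i) (hpsum : ∑ i, p i = 1) (α : ℝ)
    (hexp : ∀ u v, ∑ i, p i * dist (φ i u) (φ i v) ≤ α * dist u v) :
    ∃ (_ : MetricSpace (ι × X)), IsUltrametricSpace (ι × X) ∧
      Surjective (e ∘ Prod.snd : ι × X → M) ∧ NonContractive (e ∘ Prod.snd : ι × X → M) ∧ PathDistortionLE (e ∘ Prod.snd : ι × X → M) α := by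
  have : Nonempty ι :=
    Finset.univ_nonempty_iff.mp (Finset.nonempty_of_sum_ne_zero (f := p) (by simp [hpsum]))
  let ψ i := φ i ∘ e
  have hψ i : Injective (ψ i) :=
    (AntilipschitzWith.of_le_mul_dist (K := 1) (by simpa using hφ i)).injective.comp e.injective
  obtain ⟨D, hD, hDψ⟩ := exists_pos_forall_dist_le ψ
  let _ := glueMetricSpace hU hψ hD hDψ
  have hdist (a b : ι × X) : dist a b = glueDist ψ D a b := rfl
  refine ⟨_, glueDist_le_max hU hDψ, ?_, dist_le_glueDist (fun i x y => hφ i _ _) hDψ, ?_⟩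
  · exact fun u => ⟨(Classical.arbitrary ι, e.symm u), by simp⟩
  · intro q
    obtain ⟨i, hi⟩ := exists_le_of_sum_mul_le hp hpsum (sum_mul_pathLength_map_le p φ α hexp q)
    refine ⟨q.map fun u => (i, e.symm u), by simp [Function.comp_def], ?_⟩
    rw [pathLength_map] at hi ⊢
    simpa [hdist, ψ] using hi

theorem multiEmbedding_of_probabilistic_embedding_general
    (M : Type*) [MetricSpace M] [Fintype M] (n : ℕ) (hn : Fintype.card M = n)
    (k : ℕ) (Nfam : Fin k → Type) [∀ i, MetricSpace (Nfam i)]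
    (hUfam : ∀ i, IsUltrametricSpace (Nfam i))
    (φ : ∀ i, M → Nfam i)
    (hφ : ∀ (i : Fin k) (u v : M), dist u v ≤ dist (φ i u) (φ i v))
    (p : Fin k → ℝ) (hp : ∀ i, 0 ≤ p i) (hpsum : ∑ i, p i = 1)
    (α : ℝ)
    (hexp : ∀ u v : M, ∑ i, p i * dist (φ i u) (φ i v) ≤ α * dist u v) :
    ∃ (N : Type) (_ : MetricSpace N) (_ : Fintype N) (f : N → M),
      IsUltrametricSpace N ∧
      Fintype.card N ≤ k * n ∧
      Function.Surjective f ∧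
      NonContractive f ∧
      PathDistortionLE f α := by
  obtain ⟨_, hU, hsurj, hnc, hpath⟩ := exists_ultrametric_multiEmbedding_prod hUfam
    (Fintype.equivFinOfCardEq hn).symm φ hφ p hp hpsum α hexp
  exact ⟨Fin k × Fin n, _, inferInstance, _, hU, by simp, hsurj, hnc, hpath⟩

/-- A finitely-supported `α`-probabilistic embedding of a finite metric space `M` on `n`
points into ultrametrics `N_1,…,N_k` (non-contractive embeddings `φ_i : M → N_i` and
weights `p_i` summing to `1` whose expected distance expands each distance by at most a
factor `α`) yields a surjective non-contractive multi-embedding of `M` into a single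
finite ultrametric space of cardinality at most `k·n` with path distortion at most `α`. -/
theorem multiEmbedding_of_probabilistic_embedding
    (M : Type*) [MetricSpace M] [Fintype M] (n : ℕ) (hn : Fintype.card M = n)
    (k : ℕ) (Nfam : Fin k → Type) [∀ i, MetricSpace (Nfam i)] [∀ i, Fintype (Nfam i)]
    (hUfam : ∀ i, IsUltrametricSpace (Nfam i))
    (φ : ∀ i, M → Nfam i)
    (hφ : ∀ (i : Fin k) (u v : M), dist u v ≤ dist (φ i u) (φ i v))
    (p : Fin k → ℝ) (hp : ∀ i, 0 ≤ p i) (hpsum : ∑ i, p i = 1)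
    (α : ℝ)
    (hexp : ∀ u v : M, ∑ i, p i * dist (φ i u) (φ i v) ≤ α * dist u v) :
    ∃ (N : Type) (_ : MetricSpace N) (_ : Fintype N) (f : N → M),
      IsUltrametricSpace N ∧
      Fintype.card N ≤ k * n ∧
      Function.Surjective f ∧
      NonContractive f ∧
      PathDistortionLE f α :=
  multiEmbedding_of_probabilistic_embedding_general M n hn k Nfam hUfam φ hφ p hp hpsum α hexp
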